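/- arXiv:2110.08695 — 2 statements merged into one kernel-verified Lean document; each statement's English description precedes it below -/
import Mathlib

section
/- For any policy π and any h ∈ [H], the variance of the remaining return decomposes as a sum of per-step total variances: Var_π[Σ_{t=h}^H r_t] = Σ_{t=h}^H ( E_π[Var[r_t + V^π_{t+1}(s_{t+1}) | s_t, a_t]] + E_π[Var[E[r_t + V^π_{t+1}(s_{t+1}) | s_t, a_t] | s_t]] ), where s_t, a_t, r_t, s_{t+1} is the random trajectory generated by π. -/
open MeasureTheory Finset
open scoped BigOperators ENNReal Classical

noncomputable section

/-- A finite-horizon (time-inhomogeneous) Markov Decision Process with finite state space `S`,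
finite action space `A`, horizon `H`, transition kernels `P h s a : S → ℝ`, random rewards with
distribution `R h s a : PMF ℝ` supported in `[0,1]`, and initial distribution `d1`.
Time steps are indexed `h ∈ {1, …, H}`. -/
structure FinMDP (S A : Type) [Fintype S] [Fintype A] where
  H : ℕ
  P : ℕ → S → A → S → ℝ
  R : ℕ → S → A → PMF ℝ
  d1 : S → ℝ
  P_nonneg : ∀ h s a s', 0 ≤ P h s a s'
  P_sum : ∀ h s a, ∑ s', P h s a s' = 1
  R_mem : ∀ h s a, ∀ x ∈ (R h s a).support, x ∈ Set.Icc (0 : ℝ) 1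
  d1_nonneg : ∀ s, 0 ≤ d1 s
  d1_sum : ∑ s, d1 s = 1

/-- A (Markovian, time-dependent) policy. -/
structure Policy (S A : Type) [Fintype A] where
  p : ℕ → S → A → ℝ
  nonneg : ∀ h s a, 0 ≤ p h s a
  sum_one : ∀ h s, ∑ a, p h s a = 1

/-- Mean of a real-valued PMF. -/
def pmfMean (q : PMF ℝ) : ℝ := ∑' x, (q x).toReal * x

/-- Variance of a real-valued PMF. -/
def pmfVarR (q : PMF ℝ) : ℝ := ∑' x, (q x).toReal * (x - pmfMean q) ^ 2

/-- Expectation of `f` under a PMF. -/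
def pmfExp {τ : Type} (q : PMF τ) (f : τ → ℝ) : ℝ := ∑' t, (q t).toReal * f t

/-- Variance of `f` under a PMF. -/
def pmfVar {τ : Type} (q : PMF τ) (f : τ → ℝ) : ℝ := pmfExp q fun t => (f t - pmfExp q f) ^ 2

/-- Squared Hellinger distance between two PMFs. -/
def hellSq {τ : Type} (q q' : PMF τ) : ℝ := 1 - ∑' t, Real.sqrt ((q t).toReal * (q' t).toReal)

/-- Probability of an event under a PMF. -/
def prEvent {τ : Type} (q : PMF τ) (E : Set τ) : ℝ≥0∞ := q.toOuterMeasure E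

/-- Variance of `f` under a finitely supported distribution given by a weight function `p`. -/
def varDist {τ : Type} [Fintype τ] (p f : τ → ℝ) : ℝ :=
  ∑ t, p t * (f t - ∑ t', p t' * f t') ^ 2

/-- Squared Hellinger distance between two finitely supported distributions. -/
def hellFin {τ : Type} [Fintype τ] (p q : τ → ℝ) : ℝ := 1 - ∑ t, Real.sqrt (p t * q t)

variable {S A : Type} [Fintype S] [Fintype A]

/-- Mean reward at `(h, s, a)`. -/
def meanR (M : FinMDP S A) (h : ℕ) (s : S) (a : A) : ℝ := pmfMean (M.R h s a)

/-- Reward variance at `(h, s, a)`. -/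
def varR (M : FinMDP S A) (h : ℕ) (s : S) (a : A) : ℝ := pmfVarR (M.R h s a)

/-- `Var_{P_h(·|s,a)}(r_h + V)`: variance of the (conditionally independent) random reward plus
next-state value `V` given `(s,a)` at step `h`. -/
def varTot (M : FinMDP S A) (h : ℕ) (s : S) (a : A) (V : S → ℝ) : ℝ :=
  varR M h s a + varDist (M.P h s a) V

/-- Value function `V^π_h`, with `V^π_{H+1} = 0`. -/
def Vpi (M : FinMDP S A) (π : Policy S A) (h : ℕ) : S → ℝ :=
  if hh : M.H + 1 ≤ h then fun _ => 0
  else fun s => ∑ a, π.p h s a * (meanR M h s a + ∑ s', M.P h s a s' * Vpi M π (h + 1) s')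
termination_by M.H + 1 - h
decreasing_by omega

/-- Q-value function `Q^π_h`. -/
def Qpi (M : FinMDP S A) (π : Policy S A) (h : ℕ) (s : S) (a : A) : ℝ :=
  meanR M h s a + ∑ s', M.P h s a s' * Vpi M π (h + 1) s'

/-- Performance `v^π = E_{s₁ ∼ d₁}[V^π_1(s₁)]`. -/
def vOf (M : FinMDP S A) (π : Policy S A) : ℝ := ∑ s, M.d1 s * Vpi M π 1 s

/-- `π` is an optimal policy: it dominates every policy at every step and state. -/
def IsOptimal (M : FinMDP S A) (π : Policy S A) : Prop :=
  ∀ (π' : Policy S A) (h : ℕ) (s : S), Vpi M π' h s ≤ Vpi M π h s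

/-- Optimal value `v⋆`. -/
def vstar (M : FinMDP S A) : ℝ := ⨆ π : Policy S A, vOf M π

/-- Marginal state distribution `d^π_h(s)` (1-indexed; `dState 1 = d₁`). -/
def dState (M : FinMDP S A) (π : Policy S A) : ℕ → S → ℝ
  | 0 => fun _ => 0
  | 1 => M.d1
  | h + 2 => fun s' => ∑ s, ∑ a, dState M π (h + 1) s * π.p (h + 1) s a * M.P (h + 1) s a s'

/-- Marginal state-action occupancy `d^π_h(s,a)`. -/
def dOcc (M : FinMDP S A) (π : Policy S A) (h : ℕ) (s : S) (a : A) : ℝ :=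
  dState M π h s * π.p h s a

/-- Marginal state distribution at time `t` of the process started at state `s0` at time `h0`. -/
def dStateFrom [DecidableEq S] (M : FinMDP S A) (π : Policy S A) (h0 : ℕ) (s0 : S) (t : ℕ) :
    S → ℝ :=
  if ht : t ≤ h0 then fun s => if s = s0 then 1 else 0
  else fun s' => ∑ s, ∑ a, dStateFrom M π h0 s0 (t - 1) s * π.p (t - 1) s a * M.P (t - 1) s a s'
termination_by t
decreasing_by omega

/-- `d̄_m`: minimal positive marginal state-action probability of the behavior policy. -/
def dbar (M : FinMDP S A) (μ : Policy S A) : ℝ :=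
  sInf {x : ℝ | ∃ h ∈ Finset.Icc 1 M.H, ∃ s a, 0 < dOcc M μ h s a ∧ x = dOcc M μ h s a}

/-- `(s,a)` is reachable at step `h` by some policy. -/
def Reachable (M : FinMDP S A) (h : ℕ) (s : S) (a : A) : Prop :=
  ∃ π : Policy S A, 0 < dOcc M π h s a

/-- `d_m`: minimal behavior probability over all reachable state-action pairs. -/
def dmin (M : FinMDP S A) (μ : Policy S A) : ℝ :=
  sInf {x : ℝ | ∃ h ∈ Finset.Icc 1 M.H, ∃ s a, Reachable M h s a ∧ x = dOcc M μ h s a}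

/-- The class `𝒢`: there is an optimal policy covered by the behavior policy `μ`. -/
def inG (μ : Policy S A) (M : FinMDP S A) : Prop :=
  ∃ π : Policy S A, IsOptimal M π ∧ ∀ h s a, 0 < dOcc M π h s a → 0 < dOcc M μ h s a

/-- `ι = log(H·S·A/δ)`. -/
def iotaLog (H nS nA : ℕ) (δ : ℝ) : ℝ := Real.log (H * nS * nA / δ)

/-- A trajectory (episode): list of `(state, action, reward)` steps plus a final state. -/
structure Traj (S A : Type) where
  steps : List (S × A × ℝ)
  final : S

/-- PMF attached to a finitely supported real distribution. -/
def finPMF {τ : Type} [Fintype τ] (p : τ → ℝ) (h0 : ∀ t, 0 ≤ p t) (h1 : ∑ t, p t = 1) : PMF τ :=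
  PMF.ofFintype (fun t => ENNReal.ofReal (p t))
    (by rw [← ENNReal.ofReal_sum_of_nonneg (fun t _ => h0 t), h1, ENNReal.ofReal_one])

def actPMF (M : FinMDP S A) (π : Policy S A) (h : ℕ) (s : S) : PMF A :=
  finPMF (π.p h s) (π.nonneg h s) (π.sum_one h s)

def transPMF (M : FinMDP S A) (h : ℕ) (s : S) (a : A) : PMF S :=
  finPMF (M.P h s a) (M.P_nonneg h s a) (M.P_sum h s a)

def initPMF (M : FinMDP S A) : PMF S := finPMF M.d1 M.d1_nonneg M.d1_sum

/-- Law of the trajectory generated by `π` starting at state `s` at time `h`, for `k` steps. -/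
def trajFrom (M : FinMDP S A) (π : Policy S A) : ℕ → ℕ → S → PMF (Traj S A)
  | _, 0, s => PMF.pure ⟨[], s⟩
  | h, k + 1, s =>
      (actPMF M π h s).bind fun a =>
        (M.R h s a).bind fun r =>
          (transPMF M h s a).bind fun s' =>
            (trajFrom M π (h + 1) k s').map fun T => ⟨(s, a, r) :: T.steps, T.final⟩

/-- Law of a full episode generated by the behavior policy `μ`. -/
def episodePMF (M : FinMDP S A) (μ : Policy S A) : PMF (Traj S A) :=
  (initPMF M).bind fun s => trajFrom M μ 1 M.H s

/-- Law of `n` i.i.d. draws from `q` (a dataset). -/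
def iidPMF {τ : Type} (q : PMF τ) : ℕ → PMF (List τ)
  | 0 => PMF.pure []
  | n + 1 => q.bind fun x => (iidPMF q n).map fun l => x :: l

/-- Total realized reward of a trajectory. -/
def retOf (T : Traj S A) : ℝ := (T.steps.map fun x => x.2.2).sum

variable [DecidableEq S] [DecidableEq A]

/-- State visited at step `h` (1-indexed). -/
def sOf (T : Traj S A) (h : ℕ) : Option S := T.steps[h - 1]?.map Prod.fst

/-- Action taken at step `h`. -/
def aOf (T : Traj S A) (h : ℕ) : Option A := T.steps[h - 1]?.map fun x => x.2.1

/-- Reward received at step `h`. -/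
def rOf (T : Traj S A) (h : ℕ) : ℝ := (T.steps[h - 1]?.map fun x => x.2.2).getD 0

/-- State reached after step `h`. -/
def nxt (T : Traj S A) (h : ℕ) : S := (T.steps[h]?.map Prod.fst).getD T.final

/-- Whether trajectory `T` visits `(s,a)` at step `h`. -/
def hitSA (T : Traj S A) (h : ℕ) (s : S) (a : A) : Bool :=
  decide (sOf T h = some s) && decide (aOf T h = some a)

/-- `n_{s,a}` at step `h`: number of episodes in `D` visiting `(s,a)` at step `h`. -/
def nCount (D : List (Traj S A)) (h : ℕ) (s : S) (a : A) : ℕ :=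
  (D.filter fun T => hitSA T h s a).length

/-- Plug-in estimator of the transition kernel. -/
def Phat (D : List (Traj S A)) (h : ℕ) (s : S) (a : A) (s' : S) : ℝ :=
  if nCount D h s a = 0 then (Fintype.card S : ℝ)⁻¹
  else ((D.filter fun T => hitSA T h s a && decide (nxt T h = s')).length : ℝ) / nCount D h s a

/-- Plug-in estimator of the mean reward. -/
def rhat (D : List (Traj S A)) (h : ℕ) (s : S) (a : A) : ℝ :=
  if nCount D h s a = 0 then 0
  else ((D.filter fun T => hitSA T h s a).map fun T => rOf T h).sum / nCount D h s a

/-- Empirical distribution of a list of samples. -/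
def empDist (l : List S) (s : S) : ℝ := ((l.filter (· = s)).length : ℝ) / l.length

/-- An action maximizing `f`. -/
def argmaxA [Nonempty A] (f : A → ℝ) : A :=
  Classical.choose (Finset.exists_max_image (Finset.univ : Finset A) f Finset.univ_nonempty)

/-- The (deterministic) greedy policy with respect to `Q`. -/
def greedy [Nonempty A] (Q : ℕ → S → A → ℝ) : Policy S A where
  p h s a := if a = argmaxA (Q h s) then 1 else 0
  nonneg := by intro h s a; split <;> norm_num
  sum_one := by intro h s; simp

/-- VPVI (Hoeffding-style) pessimism penalty `Γ_h(s,a) = C·H·ι/√(max(n_{s,a},1))`. -/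
def vpviGamma (Hor : ℕ) (D : List (Traj S A)) (Cc δ : ℝ) (h : ℕ) (s : S) (a : A) : ℝ :=
  Cc * Hor * iotaLog Hor (Fintype.card S) (Fintype.card A) δ /
    Real.sqrt ((max (nCount D h s a) 1 : ℕ) : ℝ)

/-- VPVI value estimates (computed backwards, with truncation and greedy maximization). -/
def vpviV [Nonempty A] (Hor : ℕ) (D : List (Traj S A)) (Cc δ : ℝ) (h : ℕ) : S → ℝ :=
  if hh : Hor + 1 ≤ h then fun _ => 0
  else fun s =>
    Finset.univ.sup' Finset.univ_nonempty fun a =>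
      max 0 (min ((rhat D h s a + ∑ s', Phat D h s a s' * vpviV Hor D Cc δ (h + 1) s')
          - vpviGamma Hor D Cc δ h s a) ((Hor : ℝ) - h + 1))
termination_by Hor + 1 - h
decreasing_by omega

/-- VPVI pessimistic truncated Q-estimates `Q̄_h`. -/
def vpviQbar [Nonempty A] (Hor : ℕ) (D : List (Traj S A)) (Cc δ : ℝ) (h : ℕ) (s : S) (a : A) :
    ℝ :=
  max 0 (min ((rhat D h s a + ∑ s', Phat D h s a s' * vpviV Hor D Cc δ (h + 1) s')
      - vpviGamma Hor D Cc δ h s a) ((Hor : ℝ) - h + 1))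

/-- Output policy of VPVI. -/
def vpviPolicy [Nonempty A] (Hor : ℕ) (D : List (Traj S A)) (Cc δ : ℝ) : Policy S A :=
  greedy (vpviQbar Hor D Cc δ)

/-- APVI Bernstein-style pessimism penalty. -/
def apviGamma (Hor : ℕ) (D : List (Traj S A)) (ι Cbig : ℝ) (h : ℕ) (s : S) (a : A)
    (Vnext : S → ℝ) : ℝ :=
  if nCount D h s a = 0 then Cbig * Hor * ι
  else 2 * Real.sqrt (varDist (Phat D h s a) (fun s' => rhat D h s a + Vnext s') * ι /
        nCount D h s a)
      + 14 * Hor * ι / (3 * nCount D h s a)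

/-- APVI value estimates. -/
def apviV [Nonempty A] (Hor : ℕ) (D : List (Traj S A)) (ι Cbig : ℝ) (h : ℕ) : S → ℝ :=
  if hh : Hor + 1 ≤ h then fun _ => 0
  else fun s =>
    Finset.univ.sup' Finset.univ_nonempty fun a =>
      max 0 (min ((rhat D h s a + ∑ s', Phat D h s a s' * apviV Hor D ι Cbig (h + 1) s')
          - apviGamma Hor D ι Cbig h s a (apviV Hor D ι Cbig (h + 1))) ((Hor : ℝ) - h + 1))
termination_by Hor + 1 - h
decreasing_by all_goals omega

/-- APVI pessimistic truncated Q-estimates `Q̄_h`. -/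
def apviQbar [Nonempty A] (Hor : ℕ) (D : List (Traj S A)) (ι Cbig : ℝ) (h : ℕ) (s : S) (a : A) :
    ℝ :=
  max 0 (min ((rhat D h s a + ∑ s', Phat D h s a s' * apviV Hor D ι Cbig (h + 1) s')
      - apviGamma Hor D ι Cbig h s a (apviV Hor D ι Cbig (h + 1))) ((Hor : ℝ) - h + 1))

/-- Output policy of APVI. -/
def apviPolicy [Nonempty A] (Hor : ℕ) (D : List (Traj S A)) (ι Cbig : ℝ) : Policy S A :=
  greedy (apviQbar Hor D ι Cbig)

/-- The pessimistic augmented MDP `M†` over states `Option S` (`none` is the absorbing state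
`s†`): transitions/rewards agree with `M` on the covered set `Cov`, and all uncovered pairs as
well as `s†` transition deterministically to `s†` with reward `0`. -/
def augMDP (M : FinMDP S A) (Cov : ℕ → S → A → Prop) : FinMDP (Option S) A where
  H := M.H
  P h os a os' :=
    match os, os' with
    | some s, some s' => if Cov h s a then M.P h s a s' else 0
    | some s, none => if Cov h s a then 0 else 1
    | none, some _ => 0
    | none, none => 1
  R h os a :=
    match os with
    | some s => if Cov h s a then M.R h s a else PMF.pure 0
    | none => PMF.pure 0
  d1 os := match os with | some s => M.d1 s | none => 0
  P_nonneg := by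
    intro h os a os'
    rcases os with _ | s <;> rcases os' with _ | s' <;> dsimp only <;> try norm_num
    · split <;> norm_num
    · split
      · exact M.P_nonneg _ _ _ _
      · norm_num
  P_sum := by
    intro h os a
    rcases os with _ | s
    · simp [Fintype.sum_option]
    · by_cases hc : Cov h s a <;> simp [Fintype.sum_option, hc, M.P_sum]
  R_mem := by
    intro h os a x hx
    rcases os with _ | s
    · simp only [PMF.support_pure, Set.mem_singleton_iff] at hx
      simp [hx]
    · by_cases hc : Cov h s a
      · exact M.R_mem h s a x (by simpa [hc] using hx)
      · simp only [hc, if_false, PMF.support_pure, Set.mem_singleton_iff] at hx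
        simp [hx]
  d1_nonneg := by
    intro os; rcases os with _ | s
    · norm_num
    · exact M.d1_nonneg s
  d1_sum := by simp [Fintype.sum_option, M.d1_sum]

/-- Extend a policy on `S` to `Option S` (arbitrarily: uniform at the absorbing state). -/
def liftPolicy [Nonempty A] (π : Policy S A) : Policy (Option S) A where
  p h os a := match os with | some s => π.p h s a | none => (Fintype.card A : ℝ)⁻¹
  nonneg := by
    intro h os a; rcases os with _ | s <;> dsimp only
    · positivity
    · exact π.nonneg _ _ _
  sum_one := by
    intro h os; rcases os with _ | s <;> dsimp only
    · rw [Finset.sum_const, Finset.card_univ, nsmul_eq_mul]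
      exact mul_inv_cancel₀ (Nat.cast_ne_zero.mpr Fintype.card_ne_zero)
    · exact π.sum_one _ _

/-- Restrict a policy on `Option S` to `S`. -/
def restrictPolicy (π : Policy (Option S) A) : Policy S A where
  p h s a := π.p h (some s) a
  nonneg h s a := π.nonneg h (some s) a
  sum_one h s := π.sum_one h (some s)

/-- Empirical transition kernel of the (data-version) pessimistic augmented MDP `M̂†`. -/
def PhatDag (D : List (Traj S A)) (h : ℕ) : Option S → A → Option S → ℝ
  | some s, a, some s' => if nCount D h s a = 0 then 0 else Phat D h s a s'
  | some s, a, none => if nCount D h s a = 0 then 1 else 0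
  | none, _, some _ => 0
  | none, _, none => 1

/-- Empirical reward of the (data-version) pessimistic augmented MDP `M̂†`. -/
def rhatDag (D : List (Traj S A)) (h : ℕ) : Option S → A → ℝ
  | some s, a => rhat D h s a
  | none, _ => 0

/-- Penalty of assumption-free APVI: Bernstein penalty on observed pairs, `0` otherwise. -/
def afGamma (Hor : ℕ) (D : List (Traj S A)) (ι : ℝ) (h : ℕ) (os : Option S) (a : A)
    (Vnext : Option S → ℝ) : ℝ :=
  match os with
  | some s =>
      if nCount D h s a = 0 then 0
      else 2 * Real.sqrt (varDist (PhatDag D h (some s) a)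
            (fun os' => rhatDag D h (some s) a + Vnext os') * ι / nCount D h s a)
          + 14 * Hor * ι / (3 * nCount D h s a)
  | none => 0

/-- Assumption-free APVI value estimates (on the empirical augmented MDP). -/
def afV [Nonempty A] (Hor : ℕ) (D : List (Traj S A)) (ι : ℝ) (h : ℕ) : Option S → ℝ :=
  if hh : Hor + 1 ≤ h then fun _ => 0
  else fun os =>
    Finset.univ.sup' Finset.univ_nonempty fun a =>
      max 0 (min ((rhatDag D h os a + ∑ os', PhatDag D h os a os' * afV Hor D ι (h + 1) os')
          - afGamma Hor D ι h os a (afV Hor D ι (h + 1))) ((Hor : ℝ) - h + 1))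
termination_by Hor + 1 - h
decreasing_by all_goals omega

/-- Assumption-free APVI pessimistic truncated Q-estimates. -/
def afQbar [Nonempty A] (Hor : ℕ) (D : List (Traj S A)) (ι : ℝ) (h : ℕ) (os : Option S) (a : A) :
    ℝ :=
  max 0 (min ((rhatDag D h os a + ∑ os', PhatDag D h os a os' * afV Hor D ι (h + 1) os')
      - afGamma Hor D ι h os a (afV Hor D ι (h + 1))) ((Hor : ℝ) - h + 1))

/-- Output policy of assumption-free APVI, on the augmented state space. -/
def afPolicyAug [Nonempty A] (Hor : ℕ) (D : List (Traj S A)) (ι : ℝ) : Policy (Option S) A :=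
  greedy (afQbar Hor D ι)

/-- Output policy of assumption-free APVI, restricted to the original state space. -/
def afPolicy [Nonempty A] (Hor : ℕ) (D : List (Traj S A)) (ι : ℝ) : Policy S A :=
  restrictPolicy (afPolicyAug Hor D ι)

/-- The local non-asymptotic minimax risk `𝔑_n(𝒫)` of an instance `𝒫 = (μ, M)`:
`sup_{𝒫' ∈ 𝒢} inf_{π̂} max_{𝒬 ∈ {𝒫,𝒫'}} √n · E_𝒬[v⋆(𝒬) − v^{π̂}]`. -/
def locRisk (n : ℕ) (μ : Policy S A) (M : FinMDP S A) : ℝ :=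
  ⨆ Q : {q : Policy S A × FinMDP S A // inG q.1 q.2},
    ⨅ est : List (Traj S A) → Policy S A,
      max (Real.sqrt n * pmfExp (iidPMF (episodePMF M μ) n) fun D => vstar M - vOf M (est D))
          (Real.sqrt n *
            pmfExp (iidPMF (episodePMF Q.1.2 Q.1.1) n) fun D => vstar Q.1.2 - vOf Q.1.2 (est D))

end

/-!
The return from `(h, s)` is sampled by drawing `a_h ∼ π_h(·|s)`, then `r_h`, then `s_{h+1}`, and
adding `r_h` to the return from `(h + 1, s_{h+1})`. Since the conditional means of the return are
`Q^π_h(s, a_h)` and `V^π_{h+1}(s_{h+1})`, the law of total variance over these three draws gives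
`Var_h(s) = E_{a,s'}[Var_{h+1}(s')] + E_a[Var(r_h) + Var_{s'}(V^π_{h+1}(s'))] + Var_a(Q^π_h(s, a))`.
Unrolling this recursion and rewriting the iterated averages over the next states by the
Chapman–Kolmogorov relation for `dStateFrom` gives the sum over `t`. Rewards lie in `[0, 1]`, so
returns are bounded and all the series involved converge.
-/

section PMFMoments

variable {α β : Type} {q : PMF α} {f : α → ℝ} {C : ℝ}

theorem norm_toReal_mul_le (hf : ∀ a ∈ q.support, |f a| ≤ C) (a : α) :
    ‖(q a).toReal * f a‖ ≤ (q a).toReal * C := by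
  rcases eq_or_ne (q a) 0 with ha | ha
  · simp [ha]
  · rw [Real.norm_eq_abs, abs_mul, ENNReal.abs_toReal]
    exact mul_le_mul_of_nonneg_left (hf a ha) ENNReal.toReal_nonneg

theorem summable_toReal_mul_of_abs_le (hf : ∀ a ∈ q.support, |f a| ≤ C) :
    Summable fun a => (q a).toReal * f a :=
  Summable.of_norm_bounded ((ENNReal.summable_toReal (by simp [q.tsum_coe])).mul_right C)
    (norm_toReal_mul_le hf)

theorem pmfExp_congr {g : α → ℝ} (h : ∀ a ∈ q.support, f a = g a) :
    pmfExp q f = pmfExp q g := by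
  refine tsum_congr fun a => ?_
  rcases eq_or_ne (q a) 0 with ha | ha
  · simp [ha]
  · rw [h a ha]

theorem pmfExp_const (c : ℝ) : pmfExp q (fun _ => c) = c := by
  rw [pmfExp, tsum_mul_right, ← ENNReal.tsum_toReal_eq q.apply_ne_top, q.tsum_coe,
    ENNReal.toReal_one, one_mul]

theorem pmfExp_add {g : α → ℝ} (hf : Summable fun a => (q a).toReal * f a)
    (hg : Summable fun a => (q a).toReal * g a) :
    pmfExp q (fun a => f a + g a) = pmfExp q f + pmfExp q g := by
  simp only [pmfExp, mul_add]
  exact hf.tsum_add hg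

theorem pmfExp_const_mul (c : ℝ) :
    pmfExp q (fun a => c * f a) = c * pmfExp q f := by
  simp only [pmfExp, mul_left_comm _ c]
  exact tsum_mul_left

theorem pmfExp_add_const (hf : ∀ a ∈ q.support, |f a| ≤ C) (c : ℝ) :
    pmfExp q (fun a => f a + c) = pmfExp q f + c := by
  rw [pmfExp_add (summable_toReal_mul_of_abs_le hf)
    (summable_toReal_mul_of_abs_le (C := |c|) fun _ _ => le_rfl), pmfExp_const]

theorem abs_pmfExp_le (hf : ∀ a ∈ q.support, |f a| ≤ C) : |pmfExp q f| ≤ C := by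
  have hC : Summable fun a => (q a).toReal * C :=
    summable_toReal_mul_of_abs_le (C := |C|) fun _ _ => le_rfl
  calc |pmfExp q f| ≤ ∑' a, ‖(q a).toReal * f a‖ :=
        norm_tsum_le_tsum_norm (summable_toReal_mul_of_abs_le hf).norm
    _ ≤ ∑' a, (q a).toReal * C :=
        (summable_toReal_mul_of_abs_le hf).norm.tsum_le_tsum (norm_toReal_mul_le hf) hC
    _ = C := pmfExp_const C

theorem pmfExp_pure (x : α) : pmfExp (PMF.pure x) f = f x := by
  rw [pmfExp, tsum_eq_single x fun b hb => by simp [PMF.pure_apply, hb]]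
  simp

theorem pmfExp_bind {g : α → PMF β} {f : β → ℝ}
    (hf : ∀ a ∈ q.support, ∀ b ∈ (g a).support, |f b| ≤ C) :
    pmfExp (q.bind g) f = pmfExp q fun a => pmfExp (g a) f := by
  have hW : Summable fun ab : α × β => (q ab.1).toReal * (g ab.1 ab.2).toReal := by
    have : Summable fun ab : α × β => (q ab.1 * g ab.1 ab.2).toReal := by
      refine ENNReal.summable_toReal ?_
      rw [ENNReal.tsum_prod (f := fun a b => q a * g a b)]
      simp [ENNReal.tsum_mul_left, PMF.tsum_coe]
    simpa [ENNReal.toReal_mul] using this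
  have hF : Summable (Function.uncurry fun a b => (q a).toReal * ((g a b).toReal * f b)) := by
    refine Summable.of_norm_bounded (hW.mul_right C) fun ⟨a, b⟩ => ?_
    rcases eq_or_ne (q a) 0 with ha | ha
    · simp [ha]
    rcases eq_or_ne (g a b) 0 with hb | hb
    · simp [hb]
    simp only [Function.uncurry, Real.norm_eq_abs, abs_mul, ENNReal.abs_toReal, ← mul_assoc]
    exact mul_le_mul_of_nonneg_left (hf a ha b hb) (by positivity)
  calc pmfExp (q.bind g) f
      = ∑' b, ∑' a, (q a).toReal * ((g a b).toReal * f b) := by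
        refine tsum_congr fun b => ?_
        rw [PMF.bind_apply, ENNReal.tsum_toReal_eq fun a => ENNReal.mul_ne_top
          (q.apply_ne_top a) ((g a).apply_ne_top b), ← tsum_mul_right]
        simp [ENNReal.toReal_mul, mul_assoc]
    _ = ∑' a, ∑' b, (q a).toReal * ((g a b).toReal * f b) := hF.tsum_comm
    _ = pmfExp q fun a => pmfExp (g a) f := tsum_congr fun a => tsum_mul_left

theorem pmfExp_map {φ : α → β} {f : β → ℝ} (hf : ∀ a ∈ q.support, |f (φ a)| ≤ C) :
    pmfExp (q.map φ) f = pmfExp q (f ∘ φ) := by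
  rw [← PMF.bind_pure_comp, pmfExp_bind (C := C) (by simpa using hf)]
  simp [pmfExp_pure, Function.comp_def]

theorem pmfExp_finPMF [Fintype α] (p : α → ℝ) (h0 : ∀ a, 0 ≤ p a) (h1 : ∑ a, p a = 1) :
    pmfExp (finPMF p h0 h1) f = ∑ a, p a * f a := by
  simp [pmfExp, finPMF, tsum_fintype, ENNReal.toReal_ofReal (h0 _)]

theorem abs_sub_sq_le {x c D : ℝ} (hx : |x| ≤ C) (hc : |c| ≤ D) :
    |(x - c) ^ 2| ≤ (C + D) ^ 2 := by
  rw [abs_pow]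
  gcongr
  exact (abs_sub _ _).trans (by linarith)

theorem pmfExp_sub_sq (hf : ∀ a ∈ q.support, |f a| ≤ C) (c : ℝ) :
    pmfExp q (fun a => (f a - c) ^ 2) = pmfVar q f + (pmfExp q f - c) ^ 2 := by
  set m := pmfExp q f
  have hsq : Summable fun a => (q a).toReal * (f a - m) ^ 2 :=
    summable_toReal_mul_of_abs_le fun a ha => abs_sub_sq_le (hf a ha) le_rfl
  have hlin : Summable fun a => (q a).toReal * (2 * (m - c) * f a + (m - c) * -(c + m)) :=
    summable_toReal_mul_of_abs_le (C := 2 * |m - c| * C + |(m - c) * -(c + m)|) fun a ha => by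
      refine (abs_add_le _ _).trans ?_
      rw [abs_mul, abs_mul, abs_two]
      gcongr
      exact hf a ha
  calc pmfExp q (fun a => (f a - c) ^ 2)
      = pmfExp q (fun a => (f a - m) ^ 2 + (2 * (m - c) * f a + (m - c) * -(c + m))) := by
        congr 1 with a
        ring
    _ = pmfVar q f + (2 * (m - c) * m + (m - c) * -(c + m)) := by
        rw [pmfExp_add hsq hlin, pmfExp_add_const (C := |2 * (m - c)| * C)
          fun a ha => by rw [abs_mul]; gcongr; exact hf a ha, pmfExp_const_mul]
        rfl
    _ = pmfVar q f + (m - c) ^ 2 := by ring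

theorem pmfVar_pure (x : α) : pmfVar (PMF.pure x) f = 0 := by
  simp [pmfVar, pmfExp_pure]

theorem pmfVar_bind {g : α → PMF β} {f : β → ℝ}
    (hf : ∀ a ∈ q.support, ∀ b ∈ (g a).support, |f b| ≤ C) :
    pmfVar (q.bind g) f =
      pmfExp q (fun a => pmfVar (g a) f) + pmfVar q fun a => pmfExp (g a) f := by
  set μ := fun a => pmfExp (g a) f
  set m := pmfExp q μ
  have hμ : ∀ a ∈ q.support, |μ a| ≤ C := fun a ha => abs_pmfExp_le (hf a ha)
  have hvar : Summable fun a => (q a).toReal * pmfVar (g a) f :=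
    summable_toReal_mul_of_abs_le fun a ha =>
      abs_pmfExp_le fun b hb => abs_sub_sq_le (hf a ha b hb) (hμ a ha)
  have hsq : Summable fun a => (q a).toReal * (μ a - m) ^ 2 :=
    summable_toReal_mul_of_abs_le fun a ha => abs_sub_sq_le (hμ a ha) le_rfl
  rw [pmfVar, pmfExp_bind hf, pmfExp_bind fun a ha b hb => abs_sub_sq_le (hf a ha b hb) le_rfl,
    pmfExp_congr fun a ha => pmfExp_sub_sq (hf a ha) m, pmfExp_add hvar hsq]
  rfl

theorem pmfVar_map {φ : α → β} {f : β → ℝ} (hf : ∀ a ∈ q.support, |f (φ a)| ≤ C) :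
    pmfVar (q.map φ) f = pmfVar q (f ∘ φ) := by
  rw [pmfVar, pmfExp_map hf, pmfExp_map (f := fun b => (f b - pmfExp q (f ∘ φ)) ^ 2)
    fun a ha => abs_sub_sq_le (hf a ha) le_rfl]
  rfl

theorem pmfVar_add_const (hf : ∀ a ∈ q.support, |f a| ≤ C) (c : ℝ) :
    pmfVar q (fun a => f a + c) = pmfVar q f := by
  simp only [pmfVar, pmfExp_add_const hf, add_sub_add_right_eq_sub]

theorem pmfVar_finPMF [Fintype α] (p : α → ℝ) (h0 : ∀ a, 0 ≤ p a) (h1 : ∑ a, p a = 1) :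
    pmfVar (finPMF p h0 h1) f = varDist p f := by
  simp only [pmfVar, pmfExp_finPMF]
  rfl

end PMFMoments

section Trajectories

variable {S A : Type}

def Traj.cons (x : S × A × ℝ) (T : Traj S A) : Traj S A := ⟨x :: T.steps, T.final⟩

theorem retOf_cons (x : S × A × ℝ) (T : Traj S A) : retOf (T.cons x) = retOf T + x.2.2 := by
  simp [retOf, Traj.cons, add_comm]

theorem abs_retOf_cons_le {T : Traj S A} {C : ℝ} (hT : |retOf T| ≤ C) (x : S × A × ℝ) :
    |retOf (T.cons x)| ≤ C + |x.2.2| := by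
  rw [retOf_cons]
  exact (abs_add_le _ _).trans (by linarith)

theorem pmfExp_map_cons {q : PMF (Traj S A)} {C : ℝ} (hq : ∀ T ∈ q.support, |retOf T| ≤ C)
    (x : S × A × ℝ) : pmfExp (q.map (Traj.cons x)) retOf = pmfExp q retOf + x.2.2 := by
  rw [pmfExp_map fun T hT => abs_retOf_cons_le (hq T hT) x, Function.comp_def]
  simp only [retOf_cons]
  exact pmfExp_add_const hq _

theorem abs_retOf_le_of_mem_support_map_cons {q : PMF (Traj S A)} {C : ℝ}
    (hq : ∀ T ∈ q.support, |retOf T| ≤ C) (x : S × A × ℝ) :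
    ∀ T ∈ (q.map (Traj.cons x)).support, |retOf T| ≤ C + |x.2.2| := fun T hT => by
  obtain ⟨T', hT', rfl⟩ := (PMF.mem_support_map_iff _ _ _).1 hT
  exact abs_retOf_cons_le (hq T' hT') x

theorem pmfVar_map_cons {q : PMF (Traj S A)} {C : ℝ} (hq : ∀ T ∈ q.support, |retOf T| ≤ C)
    (x : S × A × ℝ) : pmfVar (q.map (Traj.cons x)) retOf = pmfVar q retOf := by
  rw [pmfVar_map fun T hT => abs_retOf_cons_le (hq T hT) x, Function.comp_def]
  simp only [retOf_cons]
  exact pmfVar_add_const hq _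

end Trajectories

section OneStep

variable {S A : Type} [Fintype S] [Fintype A] (M : FinMDP S A) (h : ℕ) (s : S) (a : A)

theorem abs_le_one_of_mem_support_R {r : ℝ} (hr : r ∈ (M.R h s a).support) : |r| ≤ 1 :=
  abs_le.2 ⟨by linarith [(M.R_mem h s a r hr).1], (M.R_mem h s a r hr).2⟩

variable {q : S → PMF (Traj S A)} {C : ℝ}

theorem pmfExp_transPMF_bind (hq : ∀ s', ∀ T ∈ (q s').support, |retOf T| ≤ C) (r : ℝ) :
    pmfExp ((transPMF M h s a).bind fun s' => (q s').map (Traj.cons (s, a, r))) retOf =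
      r + ∑ s', M.P h s a s' * pmfExp (q s') retOf := by
  rw [pmfExp_bind fun s' _ => abs_retOf_le_of_mem_support_map_cons (hq s') _, transPMF,
    pmfExp_finPMF]
  simp only [pmfExp_map_cons (hq _), mul_add, Finset.sum_add_distrib, ← Finset.sum_mul, M.P_sum,
    one_mul, add_comm r]

theorem pmfVar_transPMF_bind (hq : ∀ s', ∀ T ∈ (q s').support, |retOf T| ≤ C) (r : ℝ) :
    pmfVar ((transPMF M h s a).bind fun s' => (q s').map (Traj.cons (s, a, r))) retOf =
      ∑ s', M.P h s a s' * pmfVar (q s') retOf +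
        varDist (M.P h s a) fun s' => pmfExp (q s') retOf := by
  rw [pmfVar_bind fun s' _ => abs_retOf_le_of_mem_support_map_cons (hq s') _, transPMF,
    pmfExp_finPMF]
  simp only [pmfVar_map_cons (hq _), pmfExp_map_cons (hq _)]
  rw [pmfVar_add_const (C := C) fun s' _ => abs_pmfExp_le (hq s'), pmfVar_finPMF]

theorem abs_retOf_le_of_mem_support_transPMF_bind
    (hq : ∀ s', ∀ T ∈ (q s').support, |retOf T| ≤ C) {r : ℝ} (hr : r ∈ (M.R h s a).support) :
    ∀ T ∈ ((transPMF M h s a).bind fun s' => (q s').map (Traj.cons (s, a, r))).support,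
      |retOf T| ≤ C + 1 := fun T hT => by
  obtain ⟨s', -, hT⟩ := (PMF.mem_support_bind_iff _ _ _).1 hT
  exact (abs_retOf_le_of_mem_support_map_cons (hq s') _ T hT).trans
    (add_le_add_right (abs_le_one_of_mem_support_R M h s a hr) C)

theorem abs_retOf_le_of_mem_support_R_bind (hq : ∀ s', ∀ T ∈ (q s').support, |retOf T| ≤ C) :
    ∀ T ∈ ((M.R h s a).bind fun r =>
        (transPMF M h s a).bind fun s' => (q s').map (Traj.cons (s, a, r))).support,
      |retOf T| ≤ C + 1 := fun T hT => by
  obtain ⟨r, hr, hT⟩ := (PMF.mem_support_bind_iff _ _ _).1 hT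
  exact abs_retOf_le_of_mem_support_transPMF_bind M h s a hq hr T hT

theorem pmfExp_R_bind (hq : ∀ s', ∀ T ∈ (q s').support, |retOf T| ≤ C) :
    pmfExp ((M.R h s a).bind fun r =>
        (transPMF M h s a).bind fun s' => (q s').map (Traj.cons (s, a, r))) retOf =
      meanR M h s a + ∑ s', M.P h s a s' * pmfExp (q s') retOf := by
  rw [pmfExp_bind fun r hr => abs_retOf_le_of_mem_support_transPMF_bind M h s a hq hr]
  simp only [pmfExp_transPMF_bind M h s a hq]
  exact pmfExp_add_const (C := 1) (fun r hr => abs_le_one_of_mem_support_R M h s a hr) _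

theorem pmfVar_R_bind (hq : ∀ s', ∀ T ∈ (q s').support, |retOf T| ≤ C) :
    pmfVar ((M.R h s a).bind fun r =>
        (transPMF M h s a).bind fun s' => (q s').map (Traj.cons (s, a, r))) retOf =
      ∑ s', M.P h s a s' * pmfVar (q s') retOf +
        varTot M h s a fun s' => pmfExp (q s') retOf := by
  rw [pmfVar_bind fun r hr => abs_retOf_le_of_mem_support_transPMF_bind M h s a hq hr]
  simp only [pmfExp_transPMF_bind M h s a hq, pmfVar_transPMF_bind M h s a hq, pmfExp_const]
  rw [pmfVar_add_const (C := 1) (fun r hr => abs_le_one_of_mem_support_R M h s a hr), varTot]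
  change _ = _ + (pmfVar (M.R h s a) (fun r => r) + _)
  ring

end OneStep

section PolicyEvaluation

variable {S A : Type} [Fintype S] [Fintype A] (M : FinMDP S A) (π : Policy S A)

theorem trajFrom_succ (h k : ℕ) (s : S) :
    trajFrom M π h (k + 1) s = (actPMF M π h s).bind fun a => (M.R h s a).bind fun r =>
      (transPMF M h s a).bind fun s' =>
        (trajFrom M π (h + 1) k s').map (Traj.cons (s, a, r)) := by
  rw [trajFrom]
  rfl

theorem abs_retOf_le_of_mem_support_trajFrom {h k : ℕ} {s : S} :
    ∀ T ∈ (trajFrom M π h k s).support, |retOf T| ≤ k := by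
  induction k generalizing h s with
  | zero =>
    intro T hT
    rw [trajFrom, PMF.support_pure, Set.mem_singleton_iff] at hT
    simp [hT, retOf]
  | succ k ih =>
    intro T hT
    rw [trajFrom_succ] at hT
    obtain ⟨a, -, hT⟩ := (PMF.mem_support_bind_iff _ _ _).1 hT
    push_cast
    exact abs_retOf_le_of_mem_support_R_bind M h s a (fun s' => ih) T hT

theorem pmfExp_trajFrom_succ (h k : ℕ) (s : S) :
    pmfExp (trajFrom M π h (k + 1) s) retOf = ∑ a, π.p h s a *
      (meanR M h s a + ∑ s', M.P h s a s' * pmfExp (trajFrom M π (h + 1) k s') retOf) := by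
  have hq s' := abs_retOf_le_of_mem_support_trajFrom M π (h := h + 1) (k := k) (s := s')
  rw [trajFrom_succ, pmfExp_bind fun a _ => abs_retOf_le_of_mem_support_R_bind M h s a hq,
    actPMF, pmfExp_finPMF]
  simp only [pmfExp_R_bind M h s _ hq]

theorem pmfVar_trajFrom_succ (h k : ℕ) (s : S) :
    pmfVar (trajFrom M π h (k + 1) s) retOf = ∑ a, π.p h s a *
      (∑ s', M.P h s a s' * pmfVar (trajFrom M π (h + 1) k s') retOf +
        varTot M h s a fun s' => pmfExp (trajFrom M π (h + 1) k s') retOf) +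
      varDist (π.p h s) fun a =>
        meanR M h s a + ∑ s', M.P h s a s' * pmfExp (trajFrom M π (h + 1) k s') retOf := by
  have hq s' := abs_retOf_le_of_mem_support_trajFrom M π (h := h + 1) (k := k) (s := s')
  rw [trajFrom_succ, pmfVar_bind fun a _ => abs_retOf_le_of_mem_support_R_bind M h s a hq,
    actPMF, pmfExp_finPMF, pmfVar_finPMF]
  simp only [pmfExp_R_bind M h s _ hq, pmfVar_R_bind M h s _ hq]

theorem Vpi_of_le {h : ℕ} (hh : h ≤ M.H) (s : S) :
    Vpi M π h s = ∑ a, π.p h s a * Qpi M π h s a := by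
  rw [Vpi, dif_neg (by omega)]
  rfl

theorem Vpi_of_lt {h : ℕ} (hh : M.H < h) (s : S) : Vpi M π h s = 0 := by
  rw [Vpi, dif_pos (show M.H + 1 ≤ h from hh)]

theorem pmfExp_trajFrom {h k : ℕ} (hk : h + k = M.H + 1) (s : S) :
    pmfExp (trajFrom M π h k s) retOf = Vpi M π h s := by
  induction k generalizing h s with
  | zero =>
    rw [trajFrom, pmfExp_pure, Vpi_of_lt M π (by omega)]
    simp [retOf]
  | succ k ih =>
    rw [pmfExp_trajFrom_succ, Vpi_of_le M π (by omega)]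
    simp only [ih (h := h + 1) (by omega)]
    rfl

end PolicyEvaluation

section StateDistribution

variable {S A : Type} [Fintype S] [Fintype A] [DecidableEq S] (M : FinMDP S A) (π : Policy S A)

theorem sum_dStateFrom_self (h : ℕ) (s : S) (G : S → ℝ) :
    ∑ st, dStateFrom M π h s h st * G st = G s := by
  rw [dStateFrom, dif_pos le_rfl]
  simp

theorem sum_dStateFrom_succ {h t : ℕ} (ht : h ≤ t) (s : S) (G : S → ℝ) :
    ∑ st, dStateFrom M π h s (t + 1) st * G st =
      ∑ s₁, dStateFrom M π h s t s₁ * ∑ a, π.p t s₁ a * ∑ st, M.P t s₁ a st * G st := by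
  rw [dStateFrom, dif_neg (by omega)]
  simp only [Nat.add_sub_cancel, Finset.sum_mul, Finset.mul_sum, mul_assoc]
  rw [Finset.sum_comm]
  exact Finset.sum_congr rfl fun s₁ _ => Finset.sum_comm

theorem sum_dStateFrom_of_lt {h t : ℕ} (ht : h < t) (s : S) (G : S → ℝ) :
    ∑ st, dStateFrom M π h s t st * G st =
      ∑ a, π.p h s a * ∑ s', M.P h s a s' * ∑ st, dStateFrom M π (h + 1) s' t st * G st := by
  induction t, ht using Nat.le_induction generalizing G with
  | base => simp only [sum_dStateFrom_succ M π le_rfl, sum_dStateFrom_self]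
  | succ t ht ih =>
    rw [sum_dStateFrom_succ M π (by omega), ih]
    simp only [sum_dStateFrom_succ M π ht]

end StateDistribution

section TotalVariance

variable {S A : Type} [Fintype S] [Fintype A] (M : FinMDP S A) (π : Policy S A)

/-- `Var[r_t + V^π_{t+1}(s_{t+1}) | s_t = st]`, split by the law of total variance over `a_t`. -/
noncomputable def stepVar (t : ℕ) (st : S) : ℝ :=
  ∑ a, π.p t st a * varTot M t st a (Vpi M π (t + 1)) + varDist (π.p t st) (Qpi M π t st)

theorem pmfVar_trajFrom [DecidableEq S] {h k : ℕ} (hk : h + k = M.H + 1) (s : S) :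
    pmfVar (trajFrom M π h k s) retOf =
      ∑ t ∈ Finset.Icc h M.H, ∑ st, dStateFrom M π h s t st * stepVar M π t st := by
  induction k generalizing h s with
  | zero =>
    rw [trajFrom, pmfVar_pure, Finset.Icc_eq_empty (by omega), Finset.sum_empty]
  | succ k ih =>
    have hh : h ≤ M.H := by omega
    have hswap : ∀ X : S → ℕ → ℝ,
        ∑ t ∈ Finset.Icc (h + 1) M.H, ∑ a, π.p h s a * ∑ s', M.P h s a s' * X s' t =
          ∑ a, π.p h s a * ∑ s', M.P h s a s' * ∑ t ∈ Finset.Icc (h + 1) M.H, X s' t := by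
      intro X
      simp only [Finset.mul_sum]
      rw [Finset.sum_comm]
      exact Finset.sum_congr rfl fun a _ => Finset.sum_comm
    rw [pmfVar_trajFrom_succ, ← Finset.insert_Icc_add_one_left_eq_Icc hh,
      Finset.sum_insert (by simp), sum_dStateFrom_self,
      Finset.sum_congr rfl fun t ht =>
        sum_dStateFrom_of_lt M π (Finset.mem_Icc.1 ht).1 s _, hswap]
    simp only [ih (h := h + 1) (by omega), pmfExp_trajFrom M π (h := h + 1) (k := k) (by omega)]
    rw [stepVar, show (fun a => meanR M h s a + ∑ s', M.P h s a s' * Vpi M π (h + 1) s') =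
      Qpi M π h s from rfl]
    simp only [mul_add, Finset.sum_add_distrib]
    ring

end TotalVariance

/-- **Lemma (sum of total variances).**
For any policy `π`, any `h ∈ [H]` and any starting state `s` (i.e. conditionally on `s_h = s`),
the variance of the remaining return decomposes as a sum of per-step total variances:
`Var_π[Σ_{t=h}^H r_t] = Σ_{t=h}^H ( E_π[Var[r_t + V^π_{t+1}(s_{t+1}) | s_t, a_t]]
  + E_π[Var[E[r_t + V^π_{t+1}(s_{t+1}) | s_t, a_t] | s_t]] )`,
where the trajectory `s_t, a_t, r_t, s_{t+1}` is generated by `π` (from `s_h = s`), the inner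
conditional variance is `Var_{P_{s_t,a_t}}(r_t + V^π_{t+1}) = varTot`, and
`Var[E[r_t + V^π_{t+1}|s_t,a_t]|s_t]` is the variance of `Q^π_t(s_t, ·)` under `π_t(·|s_t)`. -/
theorem sum_of_total_variance :
    ∀ (S A : Type) [Fintype S] [Fintype A] [DecidableEq S] [DecidableEq A]
      [Nonempty S] [Nonempty A]
      (M : FinMDP S A) (π : Policy S A),
      ∀ h ∈ Finset.Icc 1 M.H, ∀ s : S,
        pmfVar (trajFrom M π h (M.H + 1 - h) s) retOf =
          ∑ t ∈ Finset.Icc h M.H,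
            ((∑ st, ∑ at', dStateFrom M π h s t st * π.p t st at' *
                varTot M t st at' (Vpi M π (t + 1)))
              + ∑ st, dStateFrom M π h s t st *
                  varDist (π.p t st) (fun a => Qpi M π t st a)) := by
  intro S A _ _ _ _ _ _ M π h hh s
  rw [pmfVar_trajFrom M π (by obtain ⟨-, hH⟩ := Finset.mem_Icc.1 hh; omega)]
  refine Finset.sum_congr rfl fun t _ => ?_
  simp only [stepVar, mul_add, Finset.mul_sum, mul_assoc, Finset.sum_add_distrib]
end

section
/- (Extended value difference) Let π = {π_h} and π' = {π'_h} be two arbitrary policies and {Q̂_h}_{h=1}^H arbitrary functions on S×A; define V̂_h(s) := ⟨Q̂_h(s,·), π_h(·|s)⟩ with V̂_{H+1} ≡ 0. Then for all s ∈ S: V̂_1(s) − V^{π'}_1(s) = Σ_{h=1}^H E_{π'}[⟨Q̂_h(s_h,·), π_h(·|s_h) − π'_h(·|s_h)⟩ | s_1 = s] + Σ_{h=1}^H E_{π'}[Q̂_h(s_h,a_h) − (T_h V̂_{h+1})(s_h,a_h) | s_1 = s], where (T_h V)(s,a) := r_h(s,a) + (P_h V)(s,a) and the expectations are over trajectories generated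 by π' in the MDP. -/
open MeasureTheory Finset
open scoped BigOperators ENNReal Classical

/-!
Since `V^{π'}_h(s) = ⟨(𝒯_h V^{π'}_{h+1})(s,·), π'_h(·|s)⟩`, adding and subtracting
`⟨Q̂_h(s,·), π'_h(·|s)⟩` and `⟨(𝒯_h V̂_{h+1})(s,·), π'_h(·|s)⟩` gives
`V̂_h - V^{π'}_h = ⟨Q̂_h, π_h - π'_h⟩ + ⟨Q̂_h - 𝒯_h V̂_{h+1}, π'_h⟩ + E_{π'_h, P_h}[V̂_{h+1} - V^{π'}_{h+1}]`.
Averaged over the state distribution of `π'` at time `h`, the last term is the same average at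
time `h + 1`, so the averaged differences telescope from `h = 1` to `h = H + 1`, where both value
functions vanish.
-/

section ValueDifference

variable {S A : Type} [Fintype S] [Fintype A]

noncomputable def bellmanOp (M : FinMDP S A) (h : ℕ) (V : S → ℝ) (s : S) (a : A) : ℝ :=
  meanR M h s a + ∑ s', M.P h s a s' * V s'

/-- The paper's `V̂_h` built from `Q̂ = Q` and `π`. -/
noncomputable def qToValue (M : FinMDP S A) (π : Policy S A) (Q : ℕ → S → A → ℝ) (h : ℕ)
    (s : S) : ℝ :=
  if M.H + 1 ≤ h then 0 else ∑ a, π.p h s a * Q h s a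

variable (M : FinMDP S A) (π π' : Policy S A) (Q : ℕ → S → A → ℝ)

theorem Vpi_eq_zero_of_le {h : ℕ} (hh : M.H + 1 ≤ h) (s : S) : Vpi M π h s = 0 := by
  rw [Vpi, dif_pos hh]

theorem Vpi_eq_sum_bellmanOp {h : ℕ} (hh : h ≤ M.H) (s : S) :
    Vpi M π h s = ∑ a, π.p h s a * bellmanOp M h (Vpi M π (h + 1)) s a := by
  rw [Vpi, dif_neg (by omega)]
  rfl

theorem qToValue_eq_zero_of_le {h : ℕ} (hh : M.H + 1 ≤ h) (s : S) : qToValue M π Q h s = 0 :=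
  if_pos hh

theorem qToValue_sub_Vpi {h : ℕ} (hh : h ≤ M.H) (s : S) :
    qToValue M π Q h s - Vpi M π' h s =
      ∑ a, Q h s a * (π.p h s a - π'.p h s a)
        + ∑ a, π'.p h s a * (Q h s a - bellmanOp M h (qToValue M π Q (h + 1)) s a)
        + ∑ a, π'.p h s a *
            ∑ s', M.P h s a s' * (qToValue M π Q (h + 1) s' - Vpi M π' (h + 1) s') := by
  rw [qToValue, if_neg (by omega), Vpi_eq_sum_bellmanOp M π' hh, ← sum_sub_distrib,
    ← sum_add_distrib, ← sum_add_distrib]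
  refine sum_congr rfl fun a _ => ?_
  simp only [bellmanOp, mul_sub, sum_sub_distrib]
  ring

variable [DecidableEq S] (s₀ : S)

theorem dStateFrom_of_le {h₀ t : ℕ} (ht : t ≤ h₀) (s : S) :
    dStateFrom M π h₀ s₀ t s = if s = s₀ then 1 else 0 := by
  rw [dStateFrom, dif_pos ht]

theorem dStateFrom_succ {h₀ t : ℕ} (ht : h₀ ≤ t) (s' : S) :
    dStateFrom M π h₀ s₀ (t + 1) s' =
      ∑ s, ∑ a, dStateFrom M π h₀ s₀ t s * π.p t s a * M.P t s a s' := by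
  rw [dStateFrom, dif_neg (by omega)]
  rfl

theorem sum_dStateFrom_start_mul (h₀ : ℕ) (f : S → ℝ) :
    ∑ s, dStateFrom M π h₀ s₀ h₀ s * f s = f s₀ := by
  simp [dStateFrom_of_le M π s₀ le_rfl]

theorem sum_dStateFrom_succ_mul {h₀ t : ℕ} (ht : h₀ ≤ t) (f : S → ℝ) :
    ∑ s', dStateFrom M π h₀ s₀ (t + 1) s' * f s' =
      ∑ s, dStateFrom M π h₀ s₀ t s * ∑ a, π.p t s a * ∑ s', M.P t s a s' * f s' := by
  simp only [dStateFrom_succ M π s₀ ht, sum_mul, mul_sum]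
  rw [sum_comm]
  refine sum_congr rfl fun s _ => ?_
  rw [sum_comm]
  exact sum_congr rfl fun a _ => sum_congr rfl fun s' _ => by ring

noncomputable def avgValueDiff (h : ℕ) : ℝ :=
  ∑ s, dStateFrom M π' 1 s₀ h s * (qToValue M π Q h s - Vpi M π' h s)

theorem avgValueDiff_eq_add_succ {h : ℕ} (h₁ : 1 ≤ h) (hh : h ≤ M.H) :
    avgValueDiff M π π' Q s₀ h =
      (∑ s, dStateFrom M π' 1 s₀ h s * ∑ a, Q h s a * (π.p h s a - π'.p h s a))
        + (∑ s, ∑ a, dStateFrom M π' 1 s₀ h s * π'.p h s a *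
            (Q h s a - bellmanOp M h (qToValue M π Q (h + 1)) s a))
        + avgValueDiff M π π' Q s₀ (h + 1) := by
  rw [avgValueDiff, avgValueDiff, sum_dStateFrom_succ_mul M π' s₀ h₁]
  simp only [qToValue_sub_Vpi M π π' Q hh, mul_add, sum_add_distrib, mul_sum, mul_assoc]

end ValueDifference

/-- **Lemma (extended value difference).**
Let `π` and `π'` be arbitrary policies and `{Q̂_h}` arbitrary functions on `S × A`; define
`V̂_h(s) = ⟨Q̂_h(s,·), π_h(·|s)⟩` (with `V̂_{H+1} ≡ 0`). Then for all `s ∈ S`,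
`V̂_1(s) − V^{π'}_1(s)
  = Σ_{h=1}^H E_{π'}[⟨Q̂_h(s_h,·), π_h(·|s_h) − π'_h(·|s_h)⟩ | s_1 = s]
    + Σ_{h=1}^H E_{π'}[Q̂_h(s_h,a_h) − (𝒯_h V̂_{h+1})(s_h,a_h) | s_1 = s]`,
where `(𝒯_h V)(s,a) = r_h(s,a) + (P_h V)(s,a)` and the expectations over `(s_h, a_h)` are
expressed through the marginal occupancies of `π'` started from `s` at time `1`. -/
theorem extended_value_difference :
    ∀ (S A : Type) [Fintype S] [Fintype A] [DecidableEq S] [DecidableEq A]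
      [Nonempty S] [Nonempty A]
      (M : FinMDP S A) (π π' : Policy S A) (Qh : ℕ → S → A → ℝ) (s : S),
      (if M.H + 1 ≤ 1 then 0 else ∑ a, π.p 1 s a * Qh 1 s a) - Vpi M π' 1 s =
        (∑ h ∈ Finset.Icc 1 M.H, ∑ sh, dStateFrom M π' 1 s h sh *
            ∑ a, Qh h sh a * (π.p h sh a - π'.p h sh a))
          + ∑ h ∈ Finset.Icc 1 M.H, ∑ sh, ∑ a, dStateFrom M π' 1 s h sh * π'.p h sh a *
              (Qh h sh a - (meanR M h sh a + ∑ s', M.P h sh a s' *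
                (if M.H + 1 ≤ h + 1 then 0 else ∑ a', π.p (h + 1) s' a' * Qh (h + 1) s' a'))) := by
  intro S A _ _ _ _ _ _ M π π' Qh s
  have finish : avgValueDiff M π π' Qh s (M.H + 1) = 0 := by
    simp [avgValueDiff, qToValue_eq_zero_of_le, Vpi_eq_zero_of_le]
  have telescope := sum_Ico_sub (f := avgValueDiff M π π' Qh s) (by omega : 1 ≤ M.H + 1)
  rw [Ico_add_one_right_eq_Icc] at telescope
  rw [← sum_add_distrib]
  calc _ = avgValueDiff M π π' Qh s 1 - avgValueDiff M π π' Qh s (M.H + 1) := by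
        rw [finish, sub_zero, avgValueDiff, sum_dStateFrom_start_mul]
        rfl
    _ = ∑ h ∈ Icc 1 M.H, (avgValueDiff M π π' Qh s h - avgValueDiff M π π' Qh s (h + 1)) := by
        rw [← neg_sub, ← telescope, ← sum_neg_distrib]
        simp only [neg_sub]
    _ = _ := sum_congr rfl fun h hh => by
        rw [avgValueDiff_eq_add_succ M π π' Qh s (mem_Icc.mp hh).1 (mem_Icc.mp hh).2,
          add_sub_cancel_right]
        rfl
end
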